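/- Let (A, v, w) be an n-dimensional triple and suppose the row subtraction R_{ji} is permissible for (A, v, w), i.e., a_{jk} ≥ a_{ik} for all k. Let A(1) be obtained from A by subtracting the i-th row from the j-th row, and let v(1) be obtained from v by subtracting v_i from v_j. Then v_j − v_i > 0, and (A(1), v(1), w) is again an n-dimensional triple: A(1) has nonnegative integer entries, det(A(1)) = det(A) = ±1, the entries of v(1) are positive and linearly independent over ℚ, and w = A(1)⁻¹·v(1) has positive entries. -/

import Mathlib

open Matrix

noncomputable def wvec {n : ℕ} (A : Matrix (Fin n) (Fin n) ℤ) (v : Fin n → ℝ) : Fin n → ℝ :=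
  (A.map (Int.cast : ℤ → ℝ))⁻¹ *ᵥ v

structure IsTriple {n : ℕ} (A : Matrix (Fin n) (Fin n) ℤ) (v : Fin n → ℝ) : Prop where
  nonneg : ∀ i j, 0 ≤ A i j
  det_pm : A.det = 1 ∨ A.det = -1
  v_pos : ∀ i, 0 < v i
  v_indep : LinearIndependent ℚ v
  w_pos : ∀ i, 0 < wvec A v i

/-!
Subtracting row `i` from row `j` is an elementary operation, so the determinant is unchanged; and
if `A w = v`, the new matrix sends the same `w` to `v` with `v i` subtracted from `v j`. Hence
`w` is unchanged and stays positive. Permissibility makes row `j` of the new matrix nonnegative,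
so `v j - v i` is the dot product of a nonnegative vector with the positive `w`; it is nonzero
because the `v k` are distinct, being linearly independent. Finally `v j - v i` lies in the
`ℚ`-span of `v` with coefficient `1` on `v j`, so replacing `v j` by it keeps independence.
-/

theorem Matrix.det_updateRow_sub_self {n R : Type*} [Fintype n] [DecidableEq n] [CommRing R]
    (A : Matrix n n R) {i j : n} (hij : i ≠ j) :
    (A.updateRow j (A j - A i)).det = A.det := by
  simpa [sub_eq_add_neg] using A.det_updateRow_add_smul_self hij.symm (-1)

theorem LinearIndependent.update_sub {ι R M : Type*} [DecidableEq ι] [CommRing R]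
    [AddCommGroup M] [Module R M] {f : ι → M} (hf : LinearIndependent R f) {i j : ι}
    (hij : i ≠ j) :
    LinearIndependent R (Function.update f j (f j - f i)) :=
  hf.update j _ ⟨1, one_mem _, Finsupp.single j 1 - Finsupp.single i 1,
    by simp [Finsupp.single_eq_of_ne' hij], by simp⟩

section wvec

variable {n : ℕ} {A : Matrix (Fin n) (Fin n) ℤ}

theorem isUnit_det_map_intCast (hA : IsUnit A.det) :
    IsUnit (A.map (Int.cast : ℤ → ℝ)).det := by
  rw [show A.map (Int.cast : ℤ → ℝ) = (Int.castRingHom ℝ).mapMatrix A from rfl,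
    ← RingHom.map_det]
  exact hA.map _

theorem map_intCast_mulVec_wvec (v : Fin n → ℝ) (hA : IsUnit A.det) :
    A.map (Int.cast : ℤ → ℝ) *ᵥ wvec A v = v := by
  rw [wvec, mulVec_mulVec, mul_nonsing_inv _ (isUnit_det_map_intCast hA), one_mulVec]

theorem wvec_eq_of_mulVec_eq {v w : Fin n → ℝ} (hA : IsUnit A.det)
    (hw : A.map (Int.cast : ℤ → ℝ) *ᵥ w = v) :
    wvec A v = w := by
  rw [wvec, ← hw, mulVec_mulVec, nonsing_inv_mul _ (isUnit_det_map_intCast hA), one_mulVec]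

theorem rowSub_dotProduct_wvec (v : Fin n → ℝ) (hA : IsUnit A.det) (i j : Fin n) :
    (Int.cast ∘ (A j - A i) : Fin n → ℝ) ⬝ᵥ wvec A v = v j - v i := by
  have hrow (k : Fin n) : A.map (Int.cast : ℤ → ℝ) k ⬝ᵥ wvec A v = v k :=
    congrFun (map_intCast_mulVec_wvec v hA) k
  have hcast : (Int.cast ∘ (A j - A i) : Fin n → ℝ) =
      A.map (Int.cast : ℤ → ℝ) j - A.map (Int.cast : ℤ → ℝ) i := by
    ext; simp
  rw [hcast, sub_dotProduct, hrow, hrow]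

theorem wvec_updateRow_sub (v : Fin n → ℝ) (hA : IsUnit A.det) {i j : Fin n} (hij : i ≠ j) :
    wvec (A.updateRow j (A j - A i)) (Function.update v j (v j - v i)) = wvec A v := by
  refine wvec_eq_of_mulVec_eq (by rwa [A.det_updateRow_sub_self hij]) ?_
  rw [map_updateRow, updateRow_mulVec, map_intCast_mulVec_wvec v hA,
    rowSub_dotProduct_wvec v hA]

theorem IsTriple.sub_pos {v : Fin n → ℝ} (h : IsTriple A v) {i j : Fin n} (hij : i ≠ j)
    (hperm : ∀ k, A i k ≤ A j k) :
    0 < v j - v i := by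
  have hunit : IsUnit A.det := Int.isUnit_iff.2 h.det_pm
  have hnonneg : 0 ≤ v j - v i := by
    rw [← rowSub_dotProduct_wvec v hunit]
    refine dotProduct_nonneg_of_nonneg (fun k => ?_) (fun k => (h.w_pos k).le)
    simpa using hperm k
  have hne : v j - v i ≠ 0 := sub_ne_zero.2 fun he => hij (h.v_indep.injective he).symm
  exact hnonneg.lt_of_ne' hne

end wvec

/-- A permissible row subtraction `R_{ji}` (i.e. with `A j k ≥ A i k` for all `k`, and
`i ≠ j`) transforms an `n`-dimensional triple `(A, v, w)` into an `n`-dimensional triple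
`(A(1), v(1), w)`, where `A(1)` subtracts the `i`-th row of `A` from the `j`-th row and
`v(1)` subtracts `v i` from `v j`.  In particular `v j - v i > 0`, `det A(1) = det A = ±1`,
and `w = A(1)⁻¹ · v(1)` is unchanged. -/
theorem rowSub_isTriple {n : ℕ} (A : Matrix (Fin n) (Fin n) ℤ) (v : Fin n → ℝ)
    (h : IsTriple A v) (i j : Fin n) (hij : i ≠ j)
    (hperm : ∀ k, A i k ≤ A j k) :
    0 < v j - v i ∧
    IsTriple (A.updateRow j (fun k => A j k - A i k)) (Function.update v j (v j - v i)) ∧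
    (A.updateRow j (fun k => A j k - A i k)).det = A.det ∧
    wvec (A.updateRow j (fun k => A j k - A i k)) (Function.update v j (v j - v i))
      = wvec A v := by
  have hpos := h.sub_pos hij hperm
  have hdet : (A.updateRow j (A j - A i)).det = A.det := A.det_updateRow_sub_self hij
  have hw := wvec_updateRow_sub v (Int.isUnit_iff.2 h.det_pm) hij
  refine ⟨hpos, ⟨fun k l => ?_, hdet ▸ h.det_pm, fun k => ?_, h.v_indep.update_sub hij,
    hw ▸ h.w_pos⟩, hdet, hw⟩
  · rcases eq_or_ne k j with rfl | hk
    · simpa using hperm l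
    · simpa [hk] using h.nonneg k l
  · rcases eq_or_ne k j with rfl | hk
    · simpa using hpos
    · simpa [hk] using h.v_pos k
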